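/- There does not exist a sequence (g_n) of zero-free continuous functions g_n : ℝ² → ℂ converging, uniformly on compact subsets of ℝ², to the characteristic function of the probability measure μ = (1/3)δ_{(0,1)} + (1/3)δ_{(1,0)} + (1/3)δ_{(1,1)} on ℝ². -/

import Mathlib

open MeasureTheory Filter

/-- The measure `μ = (1/3)δ_{(0,1)} + (1/3)δ_{(1,0)} + (1/3)δ_{(1,1)}` on `ℝ²`. -/
noncomputable def mu : Measure (ℝ × ℝ) :=
  (1 / 3 : ENNReal) • Measure.dirac ((0 : ℝ), (1 : ℝ)) +
  (1 / 3 : ENNReal) • Measure.dirac ((1 : ℝ), (0 : ℝ)) +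
  (1 / 3 : ENNReal) • Measure.dirac ((1 : ℝ), (1 : ℝ))

/-!
The characteristic function of `μ` factors as `φ(t) = ((1 + e^{it₁})(1 + e^{it₂}) - 1) / 3`, and
every `w` with `0 ≤ Re w` and `|w| ≤ 2` is a product `(1 + e^{ix})(1 + e^{iy})` with `(x, y)`
depending continuously on `w`. Lifting the circle `w = 1 + r e^{iθ}` gives a loop `γ` in `ℝ²`
along which `φ` runs once around the circle of radius `r / 3` about `0`. A zero-free continuous
`g` on the simply connected plane has a continuous logarithm, so `g ∘ γ` winds zero times
around `0`; but if `|g - φ| < r / 3` on `γ`, then `g ∘ γ` winds around `0` as often as `φ ∘ γ`.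
-/

open Complex Function

theorem exists_continuous_exp_eq {X : Type*} [TopologicalSpace X] [SimplyConnectedSpace X]
    [LocallyPathConnectedSpace X] {f : X → ℂ} (hf : Continuous f) (hf₀ : ∀ x, f x ≠ 0) :
    ∃ L : X → ℂ, Continuous L ∧ ∀ x, exp (L x) = f x := by
  obtain ⟨x₀⟩ := (inferInstance : Nonempty X)
  obtain ⟨L, ⟨-, hL⟩, -⟩ := isCoveringMapOn_exp.existsUnique_continuousMap_lifts ⟨f, hf⟩
    (exp_log (hf₀ x₀)) hf₀
  exact ⟨L, L.continuous, congrFun hL⟩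

theorem sub_eq_sub_of_exp_eq_exp {X : Type*} [TopologicalSpace X] [PreconnectedSpace X]
    {L₁ L₂ : X → ℂ} (h₁ : Continuous L₁) (h₂ : Continuous L₂)
    (h : ∀ x, exp (L₁ x) = exp (L₂ x)) (x y : X) : L₁ x - L₂ x = L₁ y - L₂ y :=
  isCoveringMap_exp.const_of_comp (h₁.sub h₂)
    (fun x y ↦ Subtype.ext (by simp [exp_sub, h])) x y

theorem div_mem_slitPlane_of_dist_lt {z w : ℂ} (h : dist z w < ‖w‖) : z / w ∈ slitPlane := by
  have hw : w ≠ 0 := norm_pos_iff.mp (dist_nonneg.trans_lt h)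
  have hlt : ‖z / w - 1‖ < 1 := by
    rwa [div_sub_one hw, norm_div, div_lt_one (norm_pos_iff.mpr hw), ← dist_eq]
  simpa using mem_slitPlane_of_norm_lt_one hlt

theorem not_forall_dist_exp_lt_circleMap {ℓ : ℝ → ℂ} (hℓ : Continuous ℓ)
    (hper : Periodic ℓ (2 * Real.pi)) (R : ℝ) :
    ¬ ∀ θ, dist (exp (ℓ θ)) (circleMap 0 R θ) < R := by
  intro h
  have hR : 0 < R := dist_nonneg.trans_lt (h 0)
  set ρ : ℝ → ℂ := fun θ ↦ exp (ℓ θ) / circleMap 0 R θ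
  have hρ : ∀ θ, ρ θ ∈ slitPlane := fun θ ↦
    div_mem_slitPlane_of_dist_lt (by rw [norm_circleMap_zero, abs_of_pos hR]; exact h θ)
  have hρ_cont : Continuous ρ :=
    (continuous_exp.comp hℓ).div (continuous_circleMap 0 R)
      fun θ ↦ circleMap_ne_center hR.ne'
  -- a second continuous logarithm of `exp ∘ ℓ`, which gains `2πi` over a period
  set M : ℝ → ℂ := fun θ ↦ Real.log R + θ * I + log (ρ θ)
  have hM_cont : Continuous M :=
    (continuous_const.add (continuous_ofReal.mul continuous_const)).add (hρ_cont.clog hρ)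
  have hM : ∀ θ, exp (M θ) = exp (ℓ θ) := fun θ ↦ by
    rw [exp_add, exp_add, exp_log (slitPlane_ne_zero (hρ θ)), ← ofReal_exp, Real.exp_log hR,
      ← circleMap_zero, mul_div_cancel₀ _ (circleMap_ne_center hR.ne')]
  have hρ_per : ρ (2 * Real.pi) = ρ 0 := by
    simp only [ρ, hper.eq, (periodic_circleMap 0 R).eq]
  have key := sub_eq_sub_of_exp_eq_exp hℓ hM_cont (fun θ ↦ (hM θ).symm) (2 * Real.pi) 0
  simp only [M, hper.eq, hρ_per] at key
  have : (2 * Real.pi : ℂ) * I = 0 := by push_cast at key; linear_combination -key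
  simp [Real.pi_ne_zero] at this

theorem one_add_exp_mul_one_add_exp (u a : ℝ) :
    (1 + exp ((u + a : ℝ) * I)) * (1 + exp ((u - a : ℝ) * I)) =
      2 * (Real.cos u + Real.cos a) * exp (u * I) := by
  have hu := exp_ne_zero (u * I)
  have ha := exp_ne_zero (a * I)
  push_cast
  rw [mul_add 2, two_cos, two_cos]
  simp only [add_mul, sub_mul, neg_mul, exp_add, exp_sub, exp_neg]
  field_simp
  ring

/-- The `arccos` term `A` is chosen so that `2 (cos (arg w) + cos A) = ‖w‖`, which by
`one_add_exp_mul_one_add_exp` makes the product `(1 + e^{ix})(1 + e^{iy})` equal to `w`. -/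
noncomputable def angleLift (w : ℂ) : ℝ × ℝ :=
  (arg w + Real.arccos (‖w‖ / 2 - Real.cos (arg w)),
    arg w - Real.arccos (‖w‖ / 2 - Real.cos (arg w)))

theorem one_add_exp_mul_one_add_exp_angleLift {w : ℂ} (hre : 0 ≤ w.re) (hnorm : ‖w‖ ≤ 2) :
    (1 + exp ((angleLift w).1 * I)) * (1 + exp ((angleLift w).2 * I)) = w := by
  have hcos : 0 ≤ Real.cos (arg w) := by
    have := abs_le.mp (abs_arg_le_pi_div_two_iff.mpr hre)
    exact Real.cos_nonneg_of_neg_pi_div_two_le_of_le this.1 this.2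
  rw [angleLift, one_add_exp_mul_one_add_exp, Real.cos_arccos
    (by linarith [Real.cos_le_one (arg w), norm_nonneg w]) (by linarith)]
  convert norm_mul_exp_arg_mul_I w using 2
  push_cast
  ring

theorem continuousOn_angleLift : ContinuousOn angleLift slitPlane := by
  have harg := continuousOn_arg
  have hA : ContinuousOn (fun w : ℂ ↦ Real.arccos (‖w‖ / 2 - Real.cos (arg w))) slitPlane :=
    Real.continuous_arccos.comp_continuousOn
      ((continuous_norm.continuousOn.div_const 2).sub (Real.continuous_cos.comp_continuousOn harg))
  exact (harg.add hA).prodMk (harg.sub hA)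

theorem re_circleMap_one_pos {R : ℝ} (hR : |R| < 1) (θ : ℝ) : 0 < (circleMap 1 R θ).re := by
  have hre : (circleMap 1 R θ).re = 1 + R * Real.cos θ := by
    rw [← sub_add_cancel (circleMap 1 R θ) 1, circleMap_sub_center, add_re, circleMap_zero_re,
      one_re, add_comm]
  have hRcos : |R * Real.cos θ| < 1 := by
    rw [abs_mul]
    exact (mul_le_of_le_one_right (abs_nonneg R) (Real.abs_cos_le_one θ)).trans_lt hR
  rw [hre]
  linarith [neg_abs_le (R * Real.cos θ)]

theorem norm_circleMap_one_le {R : ℝ} (hR : |R| ≤ 1) (θ : ℝ) : ‖circleMap 1 R θ‖ ≤ 2 := by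
  calc ‖circleMap 1 R θ‖ ≤ ‖(1 : ℂ)‖ + |R| := by
        rw [← norm_circleMap_zero R θ, ← circleMap_sub_center]
        exact norm_le_insert' _ _
    _ ≤ 2 := by norm_num; linarith

theorem continuous_angleLift_comp_circleMap {R : ℝ} (hR : |R| < 1) :
    Continuous (angleLift ∘ circleMap 1 R) :=
  continuousOn_angleLift.comp_continuous (continuous_circleMap 1 R)
    fun θ ↦ mem_slitPlane_iff.mpr (Or.inl (re_circleMap_one_pos hR θ))

theorem integral_mu_eq (t : ℝ × ℝ) :
    ∫ z : ℝ × ℝ, exp (I * ((t.1 * z.1 + t.2 * z.2 : ℝ) : ℂ)) ∂mu =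
      ((1 + exp (t.1 * I)) * (1 + exp (t.2 * I)) - 1) / 3 := by
  have hint (a : ℝ × ℝ) : Integrable (fun z : ℝ × ℝ ↦ exp (I * ((t.1 * z.1 + t.2 * z.2 : ℝ) : ℂ)))
      ((1 / 3 : ENNReal) • Measure.dirac a) :=
    (integrable_dirac (by simp)).smul_measure (by simp)
  rw [mu, integral_add_measure ((hint _).add_measure (hint _)) (hint _),
    integral_add_measure (hint _) (hint _)]
  simp only [integral_smul_measure, integral_dirac]
  norm_num [mul_add, mul_comm I]
  rw [add_mul, exp_add]
  ring

theorem integral_mu_angleLift_circleMap {R : ℝ} (hR : |R| < 1) (θ : ℝ) :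
    ∫ z : ℝ × ℝ, exp (I * (((angleLift (circleMap 1 R θ)).1 * z.1 +
      (angleLift (circleMap 1 R θ)).2 * z.2 : ℝ) : ℂ)) ∂mu = circleMap 0 (R / 3) θ := by
  rw [integral_mu_eq, one_add_exp_mul_one_add_exp_angleLift (re_circleMap_one_pos hR θ).le
    (norm_circleMap_one_le hR.le θ), circleMap_sub_center, circleMap_zero, circleMap_zero]
  push_cast
  ring

/-- No sequence of zero-free continuous functions converges locally uniformly to the
characteristic function of `μ`. -/
theorem no_zero_free_approx_charFun_mu :
    ¬ ∃ g : ℕ → (ℝ × ℝ) → ℂ,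
      (∀ n, Continuous (g n)) ∧
      (∀ n p, g n p ≠ 0) ∧
      (∀ K : Set (ℝ × ℝ), IsCompact K →
        TendstoUniformlyOn g
          (fun t => ∫ z : ℝ × ℝ,
            Complex.exp (Complex.I * ((t.1 * z.1 + t.2 * z.2 : ℝ) : ℂ)) ∂mu)
          atTop K) := by
  rintro ⟨g, hg_cont, hg_ne, hg_lim⟩
  have hR : |(1 / 2 : ℝ)| < 1 := by norm_num
  set γ : ℝ → ℝ × ℝ := angleLift ∘ circleMap 1 (1 / 2)
  have hγ_cont : Continuous γ := continuous_angleLift_comp_circleMap hR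
  have hγ_per : Periodic γ (2 * Real.pi) := (periodic_circleMap 1 (1 / 2)).comp angleLift
  have hK : IsCompact (Set.range γ) := hγ_per.compact_of_continuous Real.two_pi_pos.ne' hγ_cont
  obtain ⟨n, hn⟩ :=
    (Metric.tendstoUniformlyOn_iff.mp (hg_lim _ hK) (1 / 2 / 3) (by norm_num)).exists
  obtain ⟨L, hL_cont, hL⟩ := exists_continuous_exp_eq (hg_cont n) (hg_ne n)
  refine not_forall_dist_exp_lt_circleMap (hL_cont.comp hγ_cont) (hγ_per.comp L) (1 / 2 / 3)
    fun θ ↦ ?_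
  have hθ := hn (γ θ) (Set.mem_range_self θ)
  rwa [comp_apply, hL, dist_comm, ← integral_mu_angleLift_circleMap hR θ]
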